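/- Let G, M be symmetric positive semidefinite n×n matrices with dual minimizers c_G, c_M, let Y = diag(y), and let k, m ∈ ℝ^n with ‖k‖₂ ≤ K*·√n. Then |s_{k,G} − s_{m,M}| ≤ (K*/(4λ²))·‖(G − M)·Y c_M‖₂ / n^{3/2} + (1/λ)·|(k − m)ᵀ Y c_M| / n. -/

import Mathlib

open Matrix Set

/-- Binary entropy potential, with Lean's convention `Real.log 0 = 0`. -/
noncomputable def phiEnt (c : ℝ) : ℝ := c * Real.log c + (1 - c) * Real.log (1 - c)

/-- The dual objective
`D_K(c) = (1/n)·∑ᵢ φ(cᵢ) + (1/(2λn²))·(y⊙c)ᵀ K (y⊙c)`. -/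
noncomputable def dualObj {n : ℕ} (lam : ℝ) (y : Fin n → ℝ)
    (K : Matrix (Fin n) (Fin n) ℝ) (c : Fin n → ℝ) : ℝ :=
  (1 / n) * ∑ i, phiEnt (c i) +
    (1 / (2 * lam * (n : ℝ) ^ 2)) * ((fun i => y i * c i) ⬝ᵥ (K *ᵥ fun i => y i * c i))

/-- The score `s_{k,G} = (1/(λn))·kᵀ(y⊙c)`. -/
noncomputable def score {n : ℕ} (lam : ℝ) (y k c : Fin n → ℝ) : ℝ :=
  (1 / (lam * n)) * (k ⬝ᵥ fun i => y i * c i)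

/-- Euclidean (ℓ²) norm of a vector. -/
noncomputable def e2norm {n : ℕ} (v : Fin n → ℝ) : ℝ := Real.sqrt (∑ i, (v i) ^ 2)

/-! Since `φ'' = 1 / (c (1 - c)) ≥ 4`, the dual objective `D_K` is strongly convex on the box, so it
grows away from its minimiser at least by `(2/n)‖c - c_K‖² + (1/(2λn²)) q_K(y ⊙ (c - c_K))`, where
`q_K(v) = vᵀ K v`. Adding this growth bound for `D_G` at `c_G` and for `D_M` at `c_M`, the entropy
terms cancel and, with `u = Y c_M - Y c_G` (so `‖u‖ = ‖c_M - c_G‖` as `y = ±1`), one gets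
`(4/n)‖u‖² + (1/(λn²)) q_G(u) ≤ (1/(λn²)) uᵀ(G - M) Y c_M`. Since `G ⪰ 0`, Cauchy–Schwarz
give `4λn‖u‖ ≤ ‖(G - M) Y c_M‖`. Finally `λn (s_{k,G} - s_{m,M}) = (k - m)ᵀ Y c_M - kᵀ u`, and the
second term is at most `K* √n ‖u‖`. -/

lemma phiEnt_eq_neg_binEntropy (c : ℝ) : phiEnt c = -Real.binEntropy c := by
  simp only [phiEnt, Real.binEntropy, Real.log_inv]
  ring

lemma strongConvexOn_phiEnt : StrongConvexOn (Icc 0 1) 4 phiEnt := by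
  rw [strongConvexOn_iff_convex]
  simp only [Real.norm_eq_abs, sq_abs, phiEnt_eq_neg_binEntropy]
  refine convexOn_of_hasDerivWithinAt2_nonneg (convex_Icc 0 1) (by fun_prop)
    (f' := fun x => Real.log x - Real.log (1 - x) - 4 * x)
    (f'' := fun x => x⁻¹ + (1 - x)⁻¹ - 4) ?_ ?_ ?_ <;> rw [interior_Icc] <;>
    rintro x ⟨hx0, hx1⟩
  · exact ((Real.hasDerivAt_binEntropy hx0.ne' hx1.ne).neg.sub
      ((hasDerivAt_pow 2 x).const_mul (4 / 2))).hasDerivWithinAt.congr_deriv (by ring)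
  · have hlog₁ := (Real.hasDerivAt_log (sub_pos.2 hx1).ne').comp x ((hasDerivAt_id x).const_sub 1)
    exact (((Real.hasDerivAt_log hx0.ne').sub hlog₁).sub
      ((hasDerivAt_id x).const_mul 4)).hasDerivWithinAt.congr_deriv (by ring)
  · have h1x : 0 < 1 - x := sub_pos.2 hx1
    have : x * (1 - x) ≤ 1 / 4 := by nlinarith [sq_nonneg (x - 1 / 2)]
    rw [inv_add_inv hx0.ne' h1x.ne', add_sub_cancel, sub_nonneg, le_div_iff₀ (by positivity)]
    linarith

lemma phiEnt_one_sub_mul_add_mul_le {a b t : ℝ} (ha : a ∈ Icc (0 : ℝ) 1) (hb : b ∈ Icc (0 : ℝ) 1)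
    (ht₀ : 0 ≤ t) (ht₁ : t ≤ 1) :
    phiEnt ((1 - t) * a + t * b) ≤
      (1 - t) * phiEnt a + t * phiEnt b - 2 * (1 - t) * t * (b - a) ^ 2 := by
  have := strongConvexOn_phiEnt.2 ha hb (sub_nonneg.2 ht₁) ht₀ (sub_add_cancel 1 t)
  simp only [smul_eq_mul, Real.norm_eq_abs, sq_abs] at this
  linarith [show (a - b) ^ 2 = (b - a) ^ 2 by ring]

lemma IsMinOn.le_sub_of_le_segment {E : Type*} [AddCommGroup E] [Module ℝ E] {f : E → ℝ}
    {s : Set E} {x₀ x : E} {r : ℝ} (hmin : IsMinOn f s x₀) (hs : Convex ℝ s) (hx₀ : x₀ ∈ s)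
    (hx : x ∈ s)
    (hf : ∀ t ∈ Ioo (0 : ℝ) 1,
      f ((1 - t) • x₀ + t • x) ≤ (1 - t) * f x₀ + t * f x - (1 - t) * t * r) :
    r ≤ f x - f x₀ := by
  have hbound : ∀ t ∈ Ioo (0 : ℝ) 1, (1 - t) * r ≤ f x - f x₀ := fun t ht => by
    have hmem := hs hx₀ hx (sub_nonneg.2 ht.2.le) ht.1.le (sub_add_cancel 1 t)
    have := (hmin hmem).trans (hf t ht)
    nlinarith [ht.1]
  have hlim : Filter.Tendsto (fun t : ℝ => (1 - t) * r) (nhdsWithin 0 (Ioi 0)) (nhds r) := by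
    have : Continuous fun t : ℝ => (1 - t) * r := by fun_prop
    simpa using (this.tendsto 0).mono_left nhdsWithin_le_nhds
  refine le_of_tendsto hlim ?_
  filter_upwards [Ioo_mem_nhdsGT (zero_lt_one' ℝ)] with t ht using hbound t ht

lemma dotProduct_mulVec_smul_add_smul {ι : Type*} [Fintype ι] (K : Matrix ι ι ℝ) (a b : ι → ℝ)
    (t : ℝ) :
    ((1 - t) • a + t • b) ⬝ᵥ (K *ᵥ ((1 - t) • a + t • b)) =
      (1 - t) * (a ⬝ᵥ (K *ᵥ a)) + t * (b ⬝ᵥ (K *ᵥ b)) -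
        (1 - t) * t * ((b - a) ⬝ᵥ (K *ᵥ (b - a))) := by
  simp only [mulVec_add, mulVec_smul, mulVec_sub, dotProduct_add, add_dotProduct,
    dotProduct_smul, smul_dotProduct, dotProduct_sub, sub_dotProduct, smul_eq_mul]
  ring

lemma Matrix.IsSymm.dotProduct_mulVec_sub {ι : Type*} [Fintype ι] {A : Matrix ι ι ℝ}
    (hA : A.IsSymm) (v w : ι → ℝ) :
    v ⬝ᵥ (A *ᵥ v) - w ⬝ᵥ (A *ᵥ w) =
      2 * ((v - w) ⬝ᵥ (A *ᵥ v)) - (v - w) ⬝ᵥ (A *ᵥ (v - w)) := by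
  have hcomm : w ⬝ᵥ (A *ᵥ v) = v ⬝ᵥ (A *ᵥ w) := by
    rw [dotProduct_mulVec, ← mulVec_transpose, hA.eq, dotProduct_comm]
  simp only [mulVec_sub, dotProduct_sub, sub_dotProduct, hcomm]
  ring

section EuclideanNorm

variable {n : ℕ}

lemma e2norm_nonneg (v : Fin n → ℝ) : 0 ≤ e2norm v := Real.sqrt_nonneg _

lemma sq_e2norm (v : Fin n → ℝ) : e2norm v ^ 2 = ∑ i, v i ^ 2 :=
  Real.sq_sqrt (by positivity)

lemma abs_dotProduct_le_e2norm_mul (v w : Fin n → ℝ) : |v ⬝ᵥ w| ≤ e2norm v * e2norm w := by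
  rw [← Real.sqrt_sq_eq_abs, e2norm, e2norm, ← Real.sqrt_mul (by positivity)]
  exact Real.sqrt_le_sqrt (Finset.sum_mul_sq_le_sq_mul_sq _ v w)

end EuclideanNorm

section DualObjective

variable {n : ℕ} (lam : ℝ) (y : Fin n → ℝ) (K : Matrix (Fin n) (Fin n) ℝ)

/-- Strong-convexity modulus of `dualObj lam y K` along `d`; the entropy part comes from
`φ'' ≥ 4`. -/
noncomputable def dualObjModulus (d : Fin n → ℝ) : ℝ :=
  (2 / n) * ∑ i, d i ^ 2 +
    (1 / (2 * lam * (n : ℝ) ^ 2)) * ((fun i => y i * d i) ⬝ᵥ (K *ᵥ fun i => y i * d i))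

lemma dualObjModulus_neg (d : Fin n → ℝ) :
    dualObjModulus lam y K (-d) = dualObjModulus lam y K d := by
  simp only [dualObjModulus, Pi.neg_apply, neg_sq, mul_neg]
  simp only [← Pi.neg_def, mulVec_neg, dotProduct_neg, neg_dotProduct, neg_neg]

lemma dualObjModulus_eq_of_sq_eq_one (hy : ∀ i, y i = 1 ∨ y i = -1)
    (d : Fin n → ℝ) :
    dualObjModulus lam y K d = (2 / n) * e2norm (fun i => y i * d i) ^ 2 +
      (1 / (2 * lam * (n : ℝ) ^ 2)) * ((fun i => y i * d i) ⬝ᵥ (K *ᵥ fun i => y i * d i)) := by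
  have hyd : ∀ i, (y i * d i) ^ 2 = d i ^ 2 := fun i => by
    rcases hy i with h | h <;> simp [h]
  simp only [dualObjModulus, sq_e2norm, hyd]

lemma dualObj_smul_add_smul_le {a b : Fin n → ℝ} (ha : ∀ i, a i ∈ Icc (0 : ℝ) 1)
    (hb : ∀ i, b i ∈ Icc (0 : ℝ) 1) {t : ℝ} (ht₀ : 0 ≤ t) (ht₁ : t ≤ 1) :
    dualObj lam y K ((1 - t) • a + t • b) ≤
      (1 - t) * dualObj lam y K a + t * dualObj lam y K b -
        (1 - t) * t * dualObjModulus lam y K (b - a) := by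
  have hent : ∑ i, phiEnt (((1 - t) • a + t • b) i) ≤
      (1 - t) * ∑ i, phiEnt (a i) + t * ∑ i, phiEnt (b i) -
        2 * (1 - t) * t * ∑ i, (b - a) i ^ 2 := by
    simp only [Finset.mul_sum, ← Finset.sum_add_distrib, ← Finset.sum_sub_distrib]
    exact Finset.sum_le_sum fun i _ => phiEnt_one_sub_mul_add_mul_le (ha i) (hb i) ht₀ ht₁
  have hquad := dotProduct_mulVec_smul_add_smul K (fun i => y i * a i) (fun i => y i * b i) t
  have hya : (fun i => y i * ((1 - t) • a + t • b) i) =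
      (1 - t) • (fun i => y i * a i) + t • (fun i => y i * b i) := by
    ext i; simp only [Pi.add_apply, Pi.smul_apply, smul_eq_mul]; ring
  have hyd : (fun i => y i * (b - a) i) = (fun i => y i * b i) - (fun i => y i * a i) := by
    ext i; simp only [Pi.sub_apply]; ring
  rw [← hya, ← hyd] at hquad
  simp only [dualObj, dualObjModulus, hquad]
  rw [show (2 : ℝ) / n = 2 * (1 / n) by ring]
  linarith [mul_le_mul_of_nonneg_left hent (by positivity : (0 : ℝ) ≤ 1 / n)]

lemma dualObjModulus_le_sub_of_isMinOn {c₀ c : Fin n → ℝ}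
    (hmin : IsMinOn (dualObj lam y K) {c | ∀ i, c i ∈ Icc (0 : ℝ) 1} c₀)
    (hc₀ : ∀ i, c₀ i ∈ Icc (0 : ℝ) 1) (hc : ∀ i, c i ∈ Icc (0 : ℝ) 1) :
    dualObjModulus lam y K (c - c₀) ≤ dualObj lam y K c - dualObj lam y K c₀ := by
  have hbox : Convex ℝ {c : Fin n → ℝ | ∀ i, c i ∈ Icc (0 : ℝ) 1} :=
    fun a ha b hb s t hs ht hst i => convex_Icc 0 1 (ha i) (hb i) hs ht hst
  exact hmin.le_sub_of_le_segment hbox hc₀ hc fun t ht =>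
    dualObj_smul_add_smul_le lam y K hc₀ hc ht.1.le ht.2.le

end DualObjective

section Stability

variable {n : ℕ} {lam : ℝ} {y : Fin n → ℝ} {G M : Matrix (Fin n) (Fin n) ℝ} {cG cM : Fin n → ℝ}

lemma dualObj_sub_add_dualObj_sub :
    dualObj lam y G cM - dualObj lam y G cG + (dualObj lam y M cG - dualObj lam y M cM) =
      (1 / (2 * lam * (n : ℝ) ^ 2)) *
        ((fun i => y i * cM i) ⬝ᵥ ((G - M) *ᵥ fun i => y i * cM i) -
          (fun i => y i * cG i) ⬝ᵥ ((G - M) *ᵥ fun i => y i * cG i)) := by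
  simp only [dualObj, sub_mulVec, dotProduct_sub]
  ring

lemma four_mul_lam_mul_sq_e2norm_le (hn : 0 < n) (hlam : 0 < lam)
    (hy : ∀ i, y i = 1 ∨ y i = -1) (hG : G.PosSemidef) (hGM : (G - M).IsSymm)
    (hcG : (∀ i, cG i ∈ Icc (0:ℝ) 1) ∧
      IsMinOn (dualObj lam y G) {c | ∀ i, c i ∈ Icc (0:ℝ) 1} cG)
    (hcM : (∀ i, cM i ∈ Icc (0:ℝ) 1) ∧
      IsMinOn (dualObj lam y M) {c | ∀ i, c i ∈ Icc (0:ℝ) 1} cM) :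
    4 * lam * n * e2norm ((fun i => y i * cM i) - fun i => y i * cG i) ^ 2 ≤
      ((fun i => y i * cM i) - fun i => y i * cG i) ⬝ᵥ ((G - M) *ᵥ fun i => y i * cM i) := by
  set vM : Fin n → ℝ := fun i => y i * cM i
  set u := vM - fun i => y i * cG i
  have hu : (fun i => y i * (cM - cG) i) = u := by
    ext i; simp only [Pi.sub_apply, u, vM]; ring
  have hG_growth := dualObjModulus_le_sub_of_isMinOn lam y G hcG.2 hcG.1 hcM.1
  have hM_growth := dualObjModulus_le_sub_of_isMinOn lam y M hcM.2 hcM.1 hcG.1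
  rw [dualObjModulus_eq_of_sq_eq_one _ _ _ hy, hu] at hG_growth
  rw [← neg_sub, dualObjModulus_neg, dualObjModulus_eq_of_sq_eq_one _ _ _ hy, hu] at hM_growth
  set coef : ℝ := 1 / (2 * lam * (n : ℝ) ^ 2)
  have hgap : dualObj lam y G cM - dualObj lam y G cG + (dualObj lam y M cG - dualObj lam y M cM) =
      coef * (2 * (u ⬝ᵥ ((G - M) *ᵥ vM)) - u ⬝ᵥ (G *ᵥ u) + u ⬝ᵥ (M *ᵥ u)) := by
    rw [dualObj_sub_add_dualObj_sub, hGM.dotProduct_mulVec_sub, sub_mulVec G M u, dotProduct_sub]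
    ring
  have hGu : 0 ≤ coef * u ⬝ᵥ (G *ᵥ u) :=
    mul_nonneg (by positivity) (hG.dotProduct_mulVec_nonneg u)
  have hsum : (4 / n) * e2norm u ^ 2 ≤ 2 * coef * (u ⬝ᵥ ((G - M) *ᵥ vM)) := by
    rw [show (4 : ℝ) / n = 2 * (2 / n) by ring]
    linarith
  calc 4 * lam * n * e2norm u ^ 2 = lam * n ^ 2 * ((4 / n) * e2norm u ^ 2) := by
        field_simp
    _ ≤ lam * n ^ 2 * (2 * coef * (u ⬝ᵥ ((G - M) *ᵥ vM))) := by gcongr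
    _ = u ⬝ᵥ ((G - M) *ᵥ vM) := by
        simp only [coef]; field_simp

lemma four_mul_lam_mul_e2norm_le (hn : 0 < n) (hlam : 0 < lam)
    (hy : ∀ i, y i = 1 ∨ y i = -1) (hG : G.PosSemidef) (hGM : (G - M).IsSymm)
    (hcG : (∀ i, cG i ∈ Icc (0:ℝ) 1) ∧
      IsMinOn (dualObj lam y G) {c | ∀ i, c i ∈ Icc (0:ℝ) 1} cG)
    (hcM : (∀ i, cM i ∈ Icc (0:ℝ) 1) ∧
      IsMinOn (dualObj lam y M) {c | ∀ i, c i ∈ Icc (0:ℝ) 1} cM) :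
    4 * lam * n * e2norm ((fun i => y i * cM i) - fun i => y i * cG i) ≤
      e2norm ((G - M) *ᵥ fun i => y i * cM i) := by
  set u := (fun i => y i * cM i) - fun i => y i * cG i
  set W := e2norm ((G - M) *ᵥ fun i => y i * cM i)
  have hquad : 4 * lam * n * e2norm u * e2norm u ≤ W * e2norm u :=
    calc 4 * lam * n * e2norm u * e2norm u = 4 * lam * n * e2norm u ^ 2 := by ring
      _ ≤ u ⬝ᵥ ((G - M) *ᵥ fun i => y i * cM i) :=
        four_mul_lam_mul_sq_e2norm_le hn hlam hy hG hGM hcG hcM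
      _ ≤ e2norm u * W := (le_abs_self _).trans (abs_dotProduct_le_e2norm_mul _ _)
      _ = W * e2norm u := mul_comm _ _
  rcases (e2norm_nonneg u).eq_or_lt with hu | hu
  · rw [← hu, mul_zero]
    exact e2norm_nonneg _
  · exact le_of_mul_le_mul_right hquad hu

end Stability

theorem degree_action_stability_general
    {n : ℕ} (hn : 0 < n)
    (y : Fin n → ℝ) (hy : ∀ i, y i = 1 ∨ y i = -1)
    (lam : ℝ) (hlam : 0 < lam) (Kstar : ℝ)
    (G M : Matrix (Fin n) (Fin n) ℝ) (hG : G.PosSemidef) (hM : M.PosSemidef)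
    (cG cM : Fin n → ℝ)
    (hcG : (∀ i, cG i ∈ Icc (0:ℝ) 1) ∧
      IsMinOn (dualObj lam y G) {c | ∀ i, c i ∈ Icc (0:ℝ) 1} cG)
    (hcM : (∀ i, cM i ∈ Icc (0:ℝ) 1) ∧
      IsMinOn (dualObj lam y M) {c | ∀ i, c i ∈ Icc (0:ℝ) 1} cM)
    (k m : Fin n → ℝ)
    (hk : e2norm k ≤ Kstar * Real.sqrt n) :
    |score lam y k cG - score lam y m cM| ≤
      (Kstar / (4 * lam ^ 2)) *
          (e2norm ((G - M) *ᵥ fun i => y i * cM i) / (n : ℝ) ^ ((3 : ℝ) / 2)) +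
        (1 / lam) * (|(k - m) ⬝ᵥ fun i => y i * cM i| / n) := by
  have hn' : (0 : ℝ) < n := Nat.cast_pos.2 hn
  set vM : Fin n → ℝ := fun i => y i * cM i
  set W := e2norm ((G - M) *ᵥ vM)
  have hGM : (G - M).IsSymm :=
    (isHermitian_iff_isSymm.1 hG.isHermitian).sub (isHermitian_iff_isSymm.1 hM.isHermitian)
  have hshift := four_mul_lam_mul_e2norm_le hn hlam hy hG hGM hcG hcM
  set u := vM - fun i => y i * cG i
  have hscore :
      score lam y k cG - score lam y m cM = 1 / (lam * n) * ((k - m) ⬝ᵥ vM - k ⬝ᵥ u) := by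
    simp only [score, u, dotProduct_sub, sub_dotProduct]
    ring
  have hku : |k ⬝ᵥ u| ≤ Kstar * √n * (W / (4 * lam * n)) :=
    (abs_dotProduct_le_e2norm_mul k u).trans <| mul_le_mul hk
      ((le_div_iff₀ (by positivity)).2 (by linarith)) (e2norm_nonneg u)
      ((e2norm_nonneg k).trans hk)
  have hpow : (n : ℝ) ^ ((3 : ℝ) / 2) = n * √n := by
    rw [show (3 : ℝ) / 2 = 1 + 1 / 2 by norm_num, Real.rpow_add hn', Real.rpow_one,
      Real.sqrt_eq_rpow]
  calc |score lam y k cG - score lam y m cM|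
      = 1 / (lam * n) * |(k - m) ⬝ᵥ vM - k ⬝ᵥ u| := by
        rw [hscore, abs_mul, abs_of_pos (by positivity)]
    _ ≤ 1 / (lam * n) * (|(k - m) ⬝ᵥ vM| + Kstar * √n * (W / (4 * lam * n))) := by
        gcongr
        exact (abs_sub _ _).trans (add_le_add_right hku _)
    _ = _ := by
        rw [hpow]
        field_simp
        linear_combination Kstar * W * Real.mul_self_sqrt hn'.le

/-- Degree-action stability:
`|s_{k,G} − s_{m,M}| ≤ (K*/(4λ²))·‖(G−M)·Y c_M‖₂ / n^{3/2} + (1/λ)·|(k−m)ᵀ Y c_M| / n`. -/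
theorem degree_action_stability
    {n : ℕ} (hn : 0 < n)
    (y : Fin n → ℝ) (hy : ∀ i, y i = 1 ∨ y i = -1)
    (lam : ℝ) (hlam : 0 < lam) (Kstar : ℝ) (hKstar : 0 < Kstar)
    (G M : Matrix (Fin n) (Fin n) ℝ) (hG : G.PosSemidef) (hM : M.PosSemidef)
    (cG cM : Fin n → ℝ)
    (hcG : (∀ i, cG i ∈ Icc (0:ℝ) 1) ∧
      IsMinOn (dualObj lam y G) {c | ∀ i, c i ∈ Icc (0:ℝ) 1} cG)
    (hcM : (∀ i, cM i ∈ Icc (0:ℝ) 1) ∧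
      IsMinOn (dualObj lam y M) {c | ∀ i, c i ∈ Icc (0:ℝ) 1} cM)
    (k m : Fin n → ℝ)
    (hk : e2norm k ≤ Kstar * Real.sqrt n) :
    |score lam y k cG - score lam y m cM| ≤
      (Kstar / (4 * lam ^ 2)) *
          (e2norm ((G - M) *ᵥ fun i => y i * cM i) / (n : ℝ) ^ ((3 : ℝ) / 2)) +
        (1 / lam) * (|(k - m) ⬝ᵥ fun i => y i * cM i| / n) :=
  degree_action_stability_general hn y hy lam hlam Kstar G M hG hM cG cM hcG hcM k m hk
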